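/- Let s ≥ 3 and α ∈ ℚ, and let φ(ρ) = ∑_{j≥0} a_j ρ^{j+1} be the compositional inverse of the polynomial ρ(φ) = φ - α φ^{s-1} (as formal power series, with a_0 = 1). Then a_k = 0 unless k is a multiple of (s-2), and a_{j(s-2)} = α^j · F_j(s-1, 1) for all j ≥ 0, where F_j(s-1,1) = (1/(j(s-1)+1))·binom(j(s-1)+1, j) is a Fuss-Catalan number. -/

import Mathlib

/-!
With `q = s - 2`, inverting `φ - α φ^(q+1)` means `φ = X + α φ^(q+1)`, hence
`φ^(k+1) = X φ^k + α φ^(k+q+1)`. This recurrence determines the coefficients of all powers of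
`φ` at once: those of `φ^k` live in degrees `k + j q`, and the Fuss–Catalan numbers
`F_j(q+1, k)` satisfy the same recurrence through the Pascal-type identity
`F_{j+1}(p, r+1) = F_{j+1}(p, r) + F_j(p, r+p)`.
-/

open Finset PowerSeries

/-- Composition `f ∘ g` of formal power series; this is the correct notion of
composition when `g` has zero constant coefficient (then `coeff n (g ^ k) = 0` for `k > n`). -/
noncomputable def compPS {R : Type*} [CommRing R] (f g : PowerSeries R) : PowerSeries R :=
  PowerSeries.mk fun n =>
    ∑ k ∈ Finset.range (n + 1), (PowerSeries.coeff (R := R) k f) * (PowerSeries.coeff (R := R) n (g ^ k))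

/-- The Fuss–Catalan number `F_j(p, r)`, with the junk value `fussCatalan p 0 0 = 0/0 = 0`
(the combinatorial value is `1`). -/
noncomputable def fussCatalan (p r j : ℕ) : ℚ :=
  r / (j * p + r) * ((j * p + r).choose j : ℚ)

theorem fussCatalan_zero_right (p : ℕ) {r : ℕ} (hr : r ≠ 0) : fussCatalan p r 0 = 1 := by
  simp [fussCatalan, hr]

theorem fussCatalan_zero_left (p j : ℕ) : fussCatalan p 0 j = 0 := by
  simp [fussCatalan]

theorem fussCatalan_succ_succ {p : ℕ} (hp : 0 < p) (r j : ℕ) :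
    fussCatalan p (r + 1) (j + 1) = fussCatalan p r (j + 1) + fussCatalan p (r + p) j := by
  unfold fussCatalan
  set n := (j + 1) * p + r with hn
  rw [show (j + 1) * p + (r + 1) = n + 1 by omega, show j * p + (r + p) = n by rw [hn]; ring]
  have hjn : j ≤ n := by nlinarith
  have hsucc : ((n + 1).choose (j + 1) : ℚ) = (n + 1) * n.choose j / (j + 1) := by
    rw [eq_div_iff (by positivity)]; exact_mod_cast (Nat.add_one_mul_choose_eq n j).symm
  have hright : (n.choose (j + 1) : ℚ) = n.choose j * (n - j) / (j + 1) := by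
    rw [eq_div_iff (by positivity)]
    have h := congrArg (Nat.cast (R := ℚ)) (Nat.choose_succ_right_eq n j)
    push_cast [Nat.cast_sub hjn] at h
    exact h
  have hn0 : ((j + 1 : ℕ) : ℚ) * p + r ≠ 0 := by positivity
  rw [hsucc, hright]
  push_cast at hn0 ⊢
  rw [hn]
  push_cast
  field_simp
  ring

section PowerSeries

variable {R : Type*} [CommRing R]

theorem coeff_pow_of_lt {φ : R⟦X⟧} (hφ0 : constantCoeff φ = 0) {m k : ℕ} (h : m < k) :
    coeff m (φ ^ k) = 0 :=
  coeff_of_lt_order m <| (Nat.cast_lt.mpr h).trans_le (le_order_pow_of_constantCoeff_eq_zero k hφ0)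

theorem compPS_sub (f g h : R⟦X⟧) : compPS (f - g) h = compPS f h - compPS g h := by
  ext n
  simp [compPS, sub_mul]

theorem compPS_C_mul_X_pow {g : R⟦X⟧} (hg : constantCoeff g = 0) (a : R) (k : ℕ) :
    compPS (C a * X ^ k) g = C a * g ^ k := by
  ext n
  simp only [compPS, coeff_mk, coeff_C_mul, coeff_X_pow, mul_ite, mul_one, mul_zero, ite_mul,
    zero_mul, sum_ite_eq', mem_range]
  split_ifs with hk
  · rfl
  · rw [coeff_pow_of_lt hg (by omega), mul_zero]

theorem compPS_X {g : R⟦X⟧} (hg : constantCoeff g = 0) : compPS X g = g := by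
  simpa using compPS_C_mul_X_pow hg 1 1

variable {q : ℕ} {α : R} {φ : R⟦X⟧}

theorem coeff_succ_pow_succ (hφ : φ = X + C α * φ ^ (q + 1)) (k n : ℕ) :
    coeff (n + 1) (φ ^ (k + 1)) = coeff n (φ ^ k) + α * coeff (n + 1) (φ ^ (k + q + 1)) := by
  have hpow : φ ^ (k + 1) = X * φ ^ k + C α * φ ^ (k + q + 1) := calc
    φ ^ (k + 1) = φ * φ ^ k := pow_succ' φ k
    _ = (X + C α * φ ^ (q + 1)) * φ ^ k := by rw [← hφ]
    _ = X * φ ^ k + C α * φ ^ (k + q + 1) := by ring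
  rw [hpow, map_add, coeff_succ_X_mul, coeff_C_mul]

theorem coeff_pow_self_eq_one (hq : 0 < q) (hφ0 : constantCoeff φ = 0)
    (hφ : φ = X + C α * φ ^ (q + 1)) (k : ℕ) : coeff k (φ ^ k) = 1 := by
  induction k with
  | zero => simp
  | succ k ih =>
    rw [coeff_succ_pow_succ hφ, ih, coeff_pow_of_lt hφ0 (by omega), mul_zero, add_zero]

theorem coeff_pow_add_eq_zero (hq : 0 < q) (hφ0 : constantCoeff φ = 0)
    (hφ : φ = X + C α * φ ^ (q + 1)) {i : ℕ} (hi : ¬ q ∣ i) (k : ℕ) :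
    coeff (k + i) (φ ^ k) = 0 := by
  induction i using Nat.strong_induction_on generalizing k with
  | _ i ihi =>
  induction k with
  | zero =>
    rw [zero_add, pow_zero, coeff_one, if_neg]
    rintro rfl
    exact hi (dvd_zero q)
  | succ k ihk =>
    rw [show k + 1 + i = k + i + 1 by omega, coeff_succ_pow_succ hφ, ihk, zero_add]
    rcases lt_or_ge i q with hiq | hiq
    · rw [coeff_pow_of_lt hφ0 (by omega), mul_zero]
    · obtain ⟨i', rfl⟩ := Nat.exists_eq_add_of_le hiq
      have hi' : ¬ q ∣ i' := fun h => hi ((Nat.dvd_add_right (dvd_refl q)).mpr h)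
      rw [show k + (q + i') + 1 = k + q + 1 + i' by omega, ihi i' (by omega) hi', mul_zero]

end PowerSeries

theorem coeff_pow_succ_add_mul {K : Type*} [Field K] [CharZero K] {q : ℕ} {α : K} {φ : K⟦X⟧}
    (hq : 0 < q) (hφ0 : constantCoeff φ = 0) (hφ : φ = X + C α * φ ^ (q + 1)) (j k : ℕ) :
    coeff (k + 1 + j * q) (φ ^ (k + 1)) = α ^ j * (fussCatalan (q + 1) (k + 1) j : K) := by
  induction j generalizing k with
  | zero =>
    rw [zero_mul, add_zero, coeff_pow_self_eq_one hq hφ0 hφ,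
      fussCatalan_zero_right _ k.succ_ne_zero]
    simp
  | succ j ihj =>
    have step (k : ℕ) : coeff (k + 1 + (j + 1) * q) (φ ^ (k + 1))
        = coeff (k + (j + 1) * q) (φ ^ k)
          + α * (α ^ j * fussCatalan (q + 1) (k + (q + 1)) j) := by
      rw [show k + 1 + (j + 1) * q = k + (j + 1) * q + 1 by ring, coeff_succ_pow_succ hφ,
        show k + (j + 1) * q + 1 = k + q + 1 + j * q by ring, ihj, add_assoc k q]
    induction k with
    | zero =>
      rw [step, fussCatalan_succ_succ (Nat.succ_pos q), zero_add, pow_zero, coeff_one,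
        if_neg (by positivity), fussCatalan_zero_left]
      push_cast
      ring
    | succ k ihk =>
      rw [step, ihk, fussCatalan_succ_succ (Nat.succ_pos q) (k + 1)]
      push_cast
      ring

theorem adiabatic_coefficients_general (s : ℕ) (hs : 3 ≤ s) (α : ℚ) (φ : PowerSeries ℚ)
    (hφ0 : constantCoeff (R := ℚ) φ = 0)
    (hinv : compPS (X - PowerSeries.C (R := ℚ) α * X ^ (s - 1)) φ = X) :
    (∀ k : ℕ, ¬ (s - 2) ∣ k → coeff (R := ℚ) (k + 1) φ = 0) ∧
    (∀ j : ℕ, coeff (R := ℚ) (j * (s - 2) + 1) φ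
        = α ^ j * ((1 / (j * (s - 1) + 1) : ℚ) * ((j * (s - 1) + 1).choose j : ℚ))) := by
  obtain ⟨q, rfl⟩ : ∃ q, s = q + 2 := ⟨s - 2, by omega⟩
  have hq : 0 < q := by omega
  rw [show q + 2 - 1 = q + 1 by omega] at hinv ⊢
  rw [Nat.add_sub_cancel]
  have hφ : φ = X + C α * φ ^ (q + 1) := by
    rw [compPS_sub, compPS_X hφ0, compPS_C_mul_X_pow hφ0] at hinv
    rw [← hinv]
    ring
  refine ⟨fun k hk => ?_, fun j => ?_⟩
  · simpa [add_comm] using coeff_pow_add_eq_zero hq hφ0 hφ hk 1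
  · have h := coeff_pow_succ_add_mul hq hφ0 hφ j 0
    rw [zero_add, pow_one, add_comm 1, Rat.cast_id] at h
    rw [h, fussCatalan]
    push_cast
    ring

/-- let `s ≥ 3`, `α ∈ ℚ`, and let `φ(ρ) = ∑_(j≥0) a_j ρ^(j+1)` (with
`a₀ = 1`) be the compositional inverse of `ρ(φ) = φ - α φ^(s-1)`. Then `a_k = 0`
unless `(s-2) ∣ k`, and `a_(j(s-2)) = α^j · F_j(s-1, 1)` where
`F_j(s-1,1) = (1/(j(s-1)+1)) · C(j(s-1)+1, j)` are Fuss-Catalan numbers. -/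
theorem adiabatic_coefficients (s : ℕ) (hs : 3 ≤ s) (α : ℚ) (φ : PowerSeries ℚ)
    (hφ0 : constantCoeff (R := ℚ) φ = 0) (hφ1 : coeff (R := ℚ) 1 φ = 1)
    (hinv : compPS (X - PowerSeries.C (R := ℚ) α * X ^ (s - 1)) φ = X)
    (hinv' : compPS φ (X - PowerSeries.C (R := ℚ) α * X ^ (s - 1)) = X) :
    (∀ k : ℕ, ¬ (s - 2) ∣ k → coeff (R := ℚ) (k + 1) φ = 0) ∧
    (∀ j : ℕ, coeff (R := ℚ) (j * (s - 2) + 1) φ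
        = α ^ j * ((1 / (j * (s - 1) + 1) : ℚ) * ((j * (s - 1) + 1).choose j : ℚ))) :=
  adiabatic_coefficients_general s hs α φ hφ0 hinv
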